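/- If Φ₁, Φ₂, Φ₊ are real numbers with 0 ≤ Φ₊ ≤ π/4, |Φ₁| ≤ Φ₊, |Φ₂| ≤ Φ₊, Φ₁ + Φ₂ ≥ 0, and |Φ₁ − Φ₂| ≤ Φ₊, and θ := Φ₁ + Φ₂ − Φ₊ satisfies θ ≥ −π/2, then (sin θ − sin 2Φ₁) + (sin θ − sin 2Φ₂) ≤ 2 sin Φ₊ − 2 sin 2Φ₊. -/

import Mathlib

/-!
Write `s = Φ₁ + Φ₂`. Spreading the pair `(Φ₁, Φ₂)` to `(Φp, θ)`, which has the same sum `s`,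
lowers `sin (2·) + sin (2·)`, so it suffices to prove the claim for `Φ₁ = Φp`, `Φ₂ = θ`. There it
reads `f θ ≤ f Φp` for `f x = sin x (1 - cos x)`, which holds because `f ≤ 0` on `[-π, 0]` while on
`[0, π/2]` both factors are nonnegative and increasing.
-/

open Real

namespace Real

-- `sin (2a) + sin (2b) = 2 sin (a + b) cos (a - b)`, and `cos` decreases in `|a - b|`.
theorem sin_two_mul_add_sin_two_mul_le {a b c d : ℝ} (hsum : a + b = c + d)
    (hs₀ : 0 ≤ a + b) (hsπ : a + b ≤ π) (hab : |a - b| ≤ |c - d|) (hcd : |c - d| ≤ π) :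
    sin (2 * c) + sin (2 * d) ≤ sin (2 * a) + sin (2 * b) := by
  have half_sum (x y : ℝ) : (2 * x + 2 * y) / 2 = x + y := by ring
  have half_diff (x y : ℝ) : (2 * x - 2 * y) / 2 = x - y := by ring
  rw [sin_add_sin, sin_add_sin, half_sum, half_sum, half_diff, half_diff, ← hsum,
    ← cos_abs (c - d), ← cos_abs (a - b)]
  have hcos : cos |c - d| ≤ cos |a - b| :=
    cos_le_cos_of_nonneg_of_le_pi (abs_nonneg _) hcd hab
  have hsin : 0 ≤ 2 * sin (a + b) := by
    have := sin_nonneg_of_nonneg_of_le_pi hs₀ hsπ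
    positivity
  exact mul_le_mul_of_nonneg_left hcos hsin

theorem sin_mul_one_sub_cos_le {θ φ : ℝ} (hθ : -π ≤ θ) (hθφ : θ ≤ φ) (hφ₀ : 0 ≤ φ)
    (hφ : φ ≤ π / 2) :
    sin θ * (1 - cos θ) ≤ sin φ * (1 - cos φ) := by
  have hsinφ : 0 ≤ sin φ := sin_nonneg_of_nonneg_of_le_pi hφ₀ (by linarith [pi_pos])
  have hcosφ : 0 ≤ 1 - cos φ := sub_nonneg.mpr (cos_le_one φ)
  rcases le_or_gt θ 0 with hθ₀ | hθ₀
  · have hsinθ : sin θ ≤ 0 := sin_nonpos_of_nonpos_of_neg_pi_le hθ₀ hθ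
    have hcosθ : 0 ≤ 1 - cos θ := sub_nonneg.mpr (cos_le_one θ)
    calc sin θ * (1 - cos θ) ≤ 0 := mul_nonpos_of_nonpos_of_nonneg hsinθ hcosθ
      _ ≤ sin φ * (1 - cos φ) := mul_nonneg hsinφ hcosφ
  · have hsin : sin θ ≤ sin φ :=
      sin_le_sin_of_le_of_le_pi_div_two (by linarith [pi_pos]) hφ hθφ
    have hcos : 1 - cos θ ≤ 1 - cos φ :=
      sub_le_sub_left (cos_le_cos_of_nonneg_of_le_pi hθ₀.le (by linarith [pi_pos]) hθφ) 1
    exact mul_le_mul hsin hcos (sub_nonneg.mpr (cos_le_one θ)) hsinφ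

end Real

theorem stmt4_general (Φ₁ Φ₂ Φp θ : ℝ)
    (hΦp0 : 0 ≤ Φp) (hΦp : Φp ≤ π / 4)
    (h1 : |Φ₁| ≤ Φp) (h2 : |Φ₂| ≤ Φp)
    (hsum : 0 ≤ Φ₁ + Φ₂)
    (hθ : θ = Φ₁ + Φ₂ - Φp) :
    (Real.sin θ - Real.sin (2 * Φ₁)) + (Real.sin θ - Real.sin (2 * Φ₂))
      ≤ 2 * Real.sin Φp - 2 * Real.sin (2 * Φp) := by
  have hΦ₁ := abs_le.mp h1
  have hΦ₂ := abs_le.mp h2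
  have hgap : |Φp - θ| = 2 * Φp - (Φ₁ + Φ₂) := by
    rw [abs_of_nonneg (by linarith), hθ]; ring
  have hspread : sin (2 * Φp) + sin (2 * θ) ≤ sin (2 * Φ₁) + sin (2 * Φ₂) :=
    sin_two_mul_add_sin_two_mul_le (by rw [hθ]; ring) hsum (by linarith [pi_pos])
      (by rw [hgap, abs_sub_le_iff]; constructor <;> linarith) (by rw [hgap]; linarith)
  have hmono : sin θ * (1 - cos θ) ≤ sin Φp * (1 - cos Φp) :=
    sin_mul_one_sub_cos_le (by linarith [pi_pos]) (by linarith) hΦp0 (by linarith)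
  rw [sin_two_mul Φp, sin_two_mul θ] at hspread
  rw [sin_two_mul Φp]
  linarith

theorem stmt4 (Φ₁ Φ₂ Φp θ : ℝ)
    (hΦp0 : 0 ≤ Φp) (hΦp : Φp ≤ π / 4)
    (h1 : |Φ₁| ≤ Φp) (h2 : |Φ₂| ≤ Φp)
    (hsum : 0 ≤ Φ₁ + Φ₂)
    (hdiff : |Φ₁ - Φ₂| ≤ Φp)
    (hθ : θ = Φ₁ + Φ₂ - Φp)
    (hθlow : -(π / 2) ≤ θ) :
    (Real.sin θ - Real.sin (2 * Φ₁)) + (Real.sin θ - Real.sin (2 * Φ₂))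
      ≤ 2 * Real.sin Φp - 2 * Real.sin (2 * Φp) :=
  stmt4_general Φ₁ Φ₂ Φp θ hΦp0 hΦp h1 h2 hsum hθ
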